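/- arXiv:2111.09819 — 6 statements merged into one kernel-verified Lean document; each statement's English description precedes it below -/
import Mathlib

section
/- Let n ≥ 1, let α², ν, t₀ > 0 be real constants, let β ∈ ℝⁿ, and let 0 < μ < 1. Then for every ξ ∈ ℝⁿ, |Λ(ξ)/(1 + μ²‖ξ‖²)| ≤ (2/μ²) · M. -/
set_option maxHeartbeats 1000000


theorem regularized_multiplier_bound
    (n : ℕ) (hn : 1 ≤ n) (a ν t₀ μ : ℝ)
    (ha : 0 < a) (hν : 0 < ν) (ht : 0 < t₀) (hμ0 : 0 < μ) (hμ1 : μ < 1)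
    (β : EuclideanSpace ℝ (Fin n))
    (Λ : EuclideanSpace ℝ (Fin n) → ℂ)
    (hΛ : ∀ ξ : EuclideanSpace ℝ (Fin n),
      Λ ξ = (((a * ‖ξ‖ ^ 2 + ν : ℝ) : ℂ) + Complex.I * ((inner ℝ β ξ : ℝ) : ℂ)) /
        (1 - Complex.exp (-((((a * ‖ξ‖ ^ 2 + ν : ℝ) : ℂ) + Complex.I * ((inner ℝ β ξ : ℝ) : ℂ)) * (t₀ : ℂ)))))
    (B M : ℝ)
    (hB : B = ⨆ j : Fin n, |β j|)
    (hM : M = max (1 / t₀ + Real.sqrt n * B / (2 * ν * t₀)) (ν + a + Real.sqrt n * B / 2)) :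
    ∀ ξ : EuclideanSpace ℝ (Fin n),
      ‖Λ ξ / ((1 + μ ^ 2 * ‖ξ‖ ^ 2 : ℝ) : ℂ)‖ ≤ 2 / μ ^ 2 * M := by
  intro ξ
  have hne : Nonempty (Fin n) := ⟨⟨0, hn⟩⟩
  set r : ℝ := ‖ξ‖ with hrdef
  have hr0 : (0:ℝ) ≤ r := norm_nonneg _
  set x : ℝ := a * r ^ 2 + ν with hxdef
  have hx0 : 0 < x := by positivity
  set y : ℝ := (inner ℝ β ξ : ℝ) with hydef
  set z : ℂ := ((x : ℝ) : ℂ) + Complex.I * ((y : ℝ) : ℂ) with hzdef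
  set S : ℝ := Real.sqrt n * B with hSdef
  -- facts about B and S
  have hjB : ∀ j : Fin n, |β j| ≤ B := by
    intro j
    rw [hB]
    exact le_ciSup (f := fun j : Fin n => |β j|) (Set.Finite.bddAbove (Set.finite_range _)) j
  have hB0 : 0 ≤ B := le_trans (abs_nonneg _) (hjB ⟨0, hn⟩)
  have hS0 : 0 ≤ S := by
    have : (0:ℝ) ≤ Real.sqrt n := Real.sqrt_nonneg _
    positivity
  have hβnorm : ‖β‖ ≤ S := by
    rw [EuclideanSpace.norm_eq, hSdef]
    have hsum : ∑ i, ‖β i‖ ^ 2 ≤ (n : ℝ) * B ^ 2 := by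
      calc ∑ i, ‖β i‖ ^ 2 ≤ ∑ _i : Fin n, B ^ 2 := by
            refine Finset.sum_le_sum fun i _ => ?_
            rw [Real.norm_eq_abs]
            exact pow_le_pow_left₀ (abs_nonneg _) (hjB i) 2
        _ = (n : ℝ) * B ^ 2 := by simp [Finset.sum_const, mul_comm]
    calc Real.sqrt (∑ i, ‖β i‖ ^ 2) ≤ Real.sqrt ((n : ℝ) * B ^ 2) :=
          Real.sqrt_le_sqrt hsum
      _ = Real.sqrt n * B := by
          rw [Real.sqrt_mul (Nat.cast_nonneg n), Real.sqrt_sq hB0]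
  have hyb : |y| ≤ S * r := by
    calc |y| ≤ ‖β‖ * ‖ξ‖ := abs_real_inner_le_norm β ξ
      _ ≤ S * r := by
          exact mul_le_mul_of_nonneg_right hβnorm hr0
  -- |z| ≤ x + |y|
  have habsz : ‖z‖ ≤ x + S * r := by
    calc ‖z‖ ≤ ‖((x : ℂ))‖ + ‖(Complex.I * (y : ℂ))‖ :=
          norm_add_le _ _
      _ = |x| + |y| := by simp
      _ ≤ x + S * r := by
          rw [abs_of_pos hx0]
          linarith [hyb]
  -- denominator lower bound
  have hzre : (-(z * (t₀ : ℂ))).re = -(x * t₀) := by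
    simp [hzdef, Complex.mul_re]
  have hexpabs : ‖Complex.exp (-(z * (t₀:ℂ)))‖ = Real.exp (-(x * t₀)) := by
    rw [Complex.norm_exp, hzre]
  have hxt : 0 < x * t₀ := mul_pos hx0 ht
  have hlow : x * t₀ / (1 + x * t₀) ≤ 1 - Real.exp (-(x * t₀)) := by
    have h1 : 1 + x * t₀ ≤ Real.exp (x * t₀) := by
      have := Real.add_one_le_exp (x * t₀); linarith
    have h2 : Real.exp (-(x * t₀)) ≤ 1 / (1 + x * t₀) := by
      rw [Real.exp_neg]
      rw [inv_eq_one_div]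
      exact one_div_le_one_div_of_le (by linarith) h1
    have h3 : x * t₀ / (1 + x * t₀) = 1 - 1 / (1 + x * t₀) := by
      field_simp
      ring
    linarith
  have hlowpos : 0 < x * t₀ / (1 + x * t₀) := by positivity
  have hden : x * t₀ / (1 + x * t₀) ≤ ‖1 - Complex.exp (-(z * (t₀:ℂ)))‖ := by
    have htri := norm_add_le (1 - Complex.exp (-(z * (t₀:ℂ)))) (Complex.exp (-(z * (t₀:ℂ))))
    simp only [sub_add_cancel, norm_one] at htri
    rw [hexpabs] at htri
    linarith
  -- main bound on Complex.abs (Λ ξ)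
  have hΛbound : ‖Λ ξ‖ ≤ (x + S * r) * (1 + x * t₀) / (x * t₀) := by
    have hstep : ‖Λ ξ‖ ≤ (x + S * r) / (x * t₀ / (1 + x * t₀)) := by
      rw [hΛ ξ, norm_div]
      have hnum : ‖((a * ‖ξ‖ ^ 2 + ν : ℝ) : ℂ) + Complex.I * ((inner ℝ β ξ : ℝ) : ℂ)‖ ≤ x + S * r := habsz
      exact div_le_div₀ (by positivity) hnum hlowpos hden
    calc ‖Λ ξ‖ ≤ (x + S * r) / (x * t₀ / (1 + x * t₀)) := hstep
      _ = (x + S * r) * (1 + x * t₀) / (x * t₀) := by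
          rw [div_div_eq_mul_div]
  -- simplify bound to P
  have hP : (x + S * r) * (1 + x * t₀) / (x * t₀) ≤ 1 / t₀ + S * r / (ν * t₀) + x + S * r := by
    have heq : (x + S * r) * (1 + x * t₀) / (x * t₀) = 1 / t₀ + S * r / (x * t₀) + x + S * r := by
      field_simp
      ring
    rw [heq]
    have hSr : 0 ≤ S * r := mul_nonneg hS0 hr0
    have hνx : ν * t₀ ≤ x * t₀ := by
      have : ν ≤ x := by rw [hxdef]; nlinarith [mul_nonneg ha.le (sq_nonneg r)]
      exact mul_le_mul_of_nonneg_right this ht.le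
    have : S * r / (x * t₀) ≤ S * r / (ν * t₀) := by
      exact div_le_div_of_nonneg_left hSr (mul_pos hν ht) hνx
    linarith
  -- final comparison
  set D : ℝ := 1 + μ ^ 2 * r ^ 2 with hDdef
  have hD0 : 0 < D := by positivity
  have hμ2 : 0 < μ ^ 2 := by positivity
  have h1 : (1:ℝ) ≤ D / μ ^ 2 := by
    rw [le_div_iff₀ hμ2]
    nlinarith [sq_nonneg (μ * r)]
  have h2 : r ≤ D / (2 * μ ^ 2) := by
    rw [le_div_iff₀ (by positivity)]
    have hmr : 2 * (μ * r) ≤ 1 + (μ * r) ^ 2 := by nlinarith [sq_nonneg (μ * r - 1)]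
    have hμr : μ ^ 2 * r ≤ μ * r := by nlinarith [mul_nonneg hμ0.le hr0]
    nlinarith [hmr, hμr]
  have h3 : r ^ 2 ≤ D / μ ^ 2 := by
    rw [le_div_iff₀ hμ2]
    nlinarith
  have hK1 : 1 / t₀ + S / (2 * ν * t₀) ≤ M := by
    rw [hM, hSdef]; exact le_max_left _ _
  have hK2 : ν + a + S / 2 ≤ M := by
    rw [hM, hSdef]; exact le_max_right _ _
  have hPfinal : 1 / t₀ + S * r / (ν * t₀) + x + S * r ≤ 2 / μ ^ 2 * M * D := by
    have e1 : 1 / t₀ ≤ 1 / t₀ * (D / μ ^ 2) :=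
      le_mul_of_one_le_right (by positivity) h1
    have e2 : S * r / (ν * t₀) ≤ S / (2 * ν * t₀) * (D / μ ^ 2) := by
      have := mul_le_mul_of_nonneg_left h2 (div_nonneg hS0 (by positivity : (0:ℝ) ≤ ν * t₀))
      calc S * r / (ν * t₀) = S / (ν * t₀) * r := by ring
        _ ≤ S / (ν * t₀) * (D / (2 * μ ^ 2)) := this
        _ = S / (2 * ν * t₀) * (D / μ ^ 2) := by ring
    have e3 : x ≤ (ν + a * r ^ 2) := by rw [hxdef]; linarith
    have e4 : a * r ^ 2 ≤ a * (D / μ ^ 2) :=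
      mul_le_mul_of_nonneg_left h3 ha.le
    have e5 : ν ≤ ν * (D / μ ^ 2) :=
      le_mul_of_one_le_right hν.le h1
    have e6 : S * r ≤ S / 2 * (D / μ ^ 2) := by
      have := mul_le_mul_of_nonneg_left h2 hS0
      calc S * r ≤ S * (D / (2 * μ ^ 2)) := this
        _ = S / 2 * (D / μ ^ 2) := by ring
    have hDμ : 0 ≤ D / μ ^ 2 := by positivity
    have hsum : 1 / t₀ + S * r / (ν * t₀) + x + S * r ≤
        ((1 / t₀ + S / (2 * ν * t₀)) + (ν + a + S / 2)) * (D / μ ^ 2) := by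
      have expand : ((1 / t₀ + S / (2 * ν * t₀)) + (ν + a + S / 2)) * (D / μ ^ 2) =
          1 / t₀ * (D / μ ^ 2) + S / (2 * ν * t₀) * (D / μ ^ 2) + ν * (D / μ ^ 2) +
          a * (D / μ ^ 2) + S / 2 * (D / μ ^ 2) := by ring
      rw [expand]
      linarith [e1, e2, e3, e4, e5, e6]
    calc 1 / t₀ + S * r / (ν * t₀) + x + S * r
        ≤ ((1 / t₀ + S / (2 * ν * t₀)) + (ν + a + S / 2)) * (D / μ ^ 2) := hsum
      _ ≤ (M + M) * (D / μ ^ 2) := by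
          exact mul_le_mul_of_nonneg_right (by linarith) hDμ
      _ = 2 / μ ^ 2 * M * D := by ring
  -- put everything together
  have habsD : ‖((1 + μ ^ 2 * ‖ξ‖ ^ 2 : ℝ) : ℂ)‖ = D := by
    rw [Complex.norm_real, Real.norm_eq_abs]
    exact abs_of_pos hD0
  rw [norm_div, habsD, div_le_iff₀ hD0]
  calc ‖Λ ξ‖ ≤ (x + S * r) * (1 + x * t₀) / (x * t₀) := hΛbound
    _ ≤ 1 / t₀ + S * r / (ν * t₀) + x + S * r := hP
    _ ≤ 2 / μ ^ 2 * M * D := hPfinal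
end

section
/- Let n ≥ 1, let α², ν, t₀ > 0 be real constants, let β ∈ ℝⁿ, and fix μ > 0. Then |Λ(ξ)/(1 + μ²‖ξ‖²)| tends to α²/μ² as ‖ξ‖ → ∞; in particular the function ξ ↦ Λ(ξ)/(1 + μ²‖ξ‖²) is bounded on ℝⁿ. -/
open Filter Complex

private lemma aux_lim1 (a ν μ : ℝ) (hμ : 0 < μ) :
    Tendsto (fun r : ℝ => (a * r ^ 2 + ν) / (1 + μ ^ 2 * r ^ 2)) atTop (nhds (a / μ ^ 2)) := by
  have hd : Tendsto (fun r : ℝ => 1 + μ ^ 2 * r ^ 2) atTop atTop := by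
    apply tendsto_atTop_add_const_left
    exact (tendsto_pow_atTop two_ne_zero).const_mul_atTop (by positivity)
  have h0 : Tendsto (fun r : ℝ => (ν - a / μ ^ 2) / (1 + μ ^ 2 * r ^ 2)) atTop (nhds 0) :=
    Tendsto.div_atTop tendsto_const_nhds hd
  have := (tendsto_const_nhds (x := a / μ ^ 2) (f := atTop)).add h0
  rw [add_zero] at this
  refine this.congr fun r => ?_
  have h1 : (1 : ℝ) + μ ^ 2 * r ^ 2 ≠ 0 := by positivity
  field_simp
  ring

private lemma aux_lim2 (c μ : ℝ) (hμ : 0 < μ) :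
    Tendsto (fun r : ℝ => c * r / (1 + μ ^ 2 * r ^ 2)) atTop (nhds 0) := by
  have hd : Tendsto (fun r : ℝ => r⁻¹ + μ ^ 2 * r) atTop atTop :=
    tendsto_inv_atTop_zero.add_atTop ((tendsto_id).const_mul_atTop (by positivity))
  have h0 : Tendsto (fun r : ℝ => c / (r⁻¹ + μ ^ 2 * r)) atTop (nhds 0) :=
    Tendsto.div_atTop tendsto_const_nhds hd
  refine h0.congr' ?_
  filter_upwards [eventually_gt_atTop 0] with r hr
  have h1 : (0 : ℝ) < 1 + μ ^ 2 * r ^ 2 := by positivity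
  have h2 : (0 : ℝ) < r⁻¹ + μ ^ 2 * r := by positivity
  rw [div_eq_div_iff h2.ne' h1.ne']
  field_simp

theorem regularized_multiplier_tendsto_and_bounded
    (n : ℕ) (hn : 1 ≤ n) (a ν t₀ μ : ℝ)
    (ha : 0 < a) (hν : 0 < ν) (ht : 0 < t₀) (hμ : 0 < μ)
    (β : EuclideanSpace ℝ (Fin n))
    (Λ : EuclideanSpace ℝ (Fin n) → ℂ)
    (hΛ : ∀ ξ : EuclideanSpace ℝ (Fin n),
      Λ ξ = (((a * ‖ξ‖ ^ 2 + ν : ℝ) : ℂ) + Complex.I * ((inner ℝ β ξ : ℝ) : ℂ)) /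
        (1 - Complex.exp (-((((a * ‖ξ‖ ^ 2 + ν : ℝ) : ℂ) + Complex.I * ((inner ℝ β ξ : ℝ) : ℂ)) * (t₀ : ℂ))))) :
    Filter.Tendsto
      (fun ξ : EuclideanSpace ℝ (Fin n) =>
        ‖Λ ξ / ((1 + μ ^ 2 * ‖ξ‖ ^ 2 : ℝ) : ℂ)‖)
      (Filter.comap (fun ξ : EuclideanSpace ℝ (Fin n) => ‖ξ‖) Filter.atTop)
      (nhds (a / μ ^ 2)) ∧
    ∃ Cb : ℝ, ∀ ξ : EuclideanSpace ℝ (Fin n),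
      ‖Λ ξ / ((1 + μ ^ 2 * ‖ξ‖ ^ 2 : ℝ) : ℂ)‖ ≤ Cb := by
  set L : Filter (EuclideanSpace ℝ (Fin n)) := Filter.comap (fun ξ : EuclideanSpace ℝ (Fin n) => ‖ξ‖) Filter.atTop with hLdef
  set x : EuclideanSpace ℝ (Fin n) → ℝ := fun ξ => a * ‖ξ‖ ^ 2 + ν with hxdef
  set y : EuclideanSpace ℝ (Fin n) → ℝ := fun ξ => (inner ℝ β ξ : ℝ) with hydef
  set c : EuclideanSpace ℝ (Fin n) → ℝ := fun ξ => 1 + μ ^ 2 * ‖ξ‖ ^ 2 with hcdef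
  set z : EuclideanSpace ℝ (Fin n) → ℂ := fun ξ => ((x ξ : ℝ) : ℂ) + Complex.I * ((y ξ : ℝ) : ℂ) with hzdef
  set e : EuclideanSpace ℝ (Fin n) → ℂ := fun ξ => Complex.exp (-(z ξ * (t₀ : ℂ))) with hedef
  have hnorm : Tendsto (fun ξ : EuclideanSpace ℝ (Fin n) => ‖ξ‖) L atTop := tendsto_comap
  have hcpos : ∀ ξ : EuclideanSpace ℝ (Fin n), (0 : ℝ) < c ξ := fun ξ => by positivity
  have hxν : ∀ ξ : EuclideanSpace ℝ (Fin n), ν ≤ x ξ := fun ξ => by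
    have : 0 ≤ a * ‖ξ‖ ^ 2 := by positivity
    simp only [hxdef]; linarith
  have hxpos : ∀ ξ : EuclideanSpace ℝ (Fin n), 0 < x ξ := fun ξ => lt_of_lt_of_le hν (hxν ξ)
  -- norm of e
  have habse : ∀ ξ : EuclideanSpace ℝ (Fin n), ‖e ξ‖ = Real.exp (-(x ξ * t₀)) := by
    intro ξ
    rw [hedef]
    simp only [Complex.norm_exp]
    congr 1
    simp [hzdef, Complex.mul_re]
  -- key pointwise identity
  have hkey : ∀ ξ : EuclideanSpace ℝ (Fin n), ‖Λ ξ / ((1 + μ ^ 2 * ‖ξ‖ ^ 2 : ℝ) : ℂ)‖ =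
      ‖z ξ / ((c ξ : ℝ) : ℂ)‖ / ‖1 - e ξ‖ := by
    intro ξ
    rw [hΛ ξ]
    rw [show ((((a * ‖ξ‖ ^ 2 + ν : ℝ) : ℂ) + Complex.I * ((inner ℝ β ξ : ℝ) : ℂ)) /
        (1 - Complex.exp (-((((a * ‖ξ‖ ^ 2 + ν : ℝ) : ℂ) + Complex.I * ((inner ℝ β ξ : ℝ) : ℂ)) * (t₀ : ℂ)))))
        = z ξ / (1 - e ξ) by rfl]
    rw [div_right_comm, norm_div]
  -- tendsto of real part quotient
  have h1 : Tendsto (fun ξ : EuclideanSpace ℝ (Fin n) => x ξ / c ξ) L (nhds (a / μ ^ 2)) :=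
    (aux_lim1 a ν μ hμ).comp hnorm
  -- tendsto of imag part quotient (squeeze)
  have h2 : Tendsto (fun ξ : EuclideanSpace ℝ (Fin n) => y ξ / c ξ) L (nhds 0) := by
    refine squeeze_zero_norm (fun ξ => ?_) ((aux_lim2 ‖β‖ μ hμ).comp hnorm)
    rw [Real.norm_eq_abs, abs_div, abs_of_pos (hcpos ξ)]
    exact div_le_div₀ (by positivity) (abs_real_inner_le_norm β ξ) (hcpos ξ) le_rfl
  -- tendsto of e to 0
  have h3 : Tendsto e L (nhds 0) := by
    have hg : Tendsto (fun ξ : EuclideanSpace ℝ (Fin n) => Real.exp (-(x ξ * t₀))) L (nhds 0) := by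
      apply Real.tendsto_exp_atBot.comp
      rw [tendsto_neg_atBot_iff]
      apply Tendsto.atTop_mul_const ht
      have hr : Tendsto (fun r : ℝ => a * r ^ 2 + ν) atTop atTop := by
        apply tendsto_atTop_add_const_right
        exact (tendsto_pow_atTop two_ne_zero).const_mul_atTop ha
      exact hr.comp hnorm
    refine squeeze_zero_norm (fun ξ => le_of_eq ?_) hg
    rw [habse ξ]
  -- abs (1 - e) → 1
  have h4 : Tendsto (fun ξ : EuclideanSpace ℝ (Fin n) => ‖1 - e ξ‖) L (nhds 1) := by
    have := (continuous_norm.tendsto (1 - 0 : ℂ)).comp (tendsto_const_nhds.sub h3)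
    simpa [Function.comp_def] using this
  -- abs (z/c) → a/μ²
  have h5 : Tendsto (fun ξ : EuclideanSpace ℝ (Fin n) => ‖z ξ / ((c ξ : ℝ) : ℂ)‖) L (nhds (a / μ ^ 2)) := by
    have hzc : Tendsto (fun ξ : EuclideanSpace ℝ (Fin n) => z ξ / ((c ξ : ℝ) : ℂ)) L (nhds ((a / μ ^ 2 : ℝ) : ℂ)) := by
      have h1' := (Complex.continuous_ofReal.tendsto _).comp h1
      have h2' := (Complex.continuous_ofReal.tendsto _).comp h2
      have := h1'.add ((tendsto_const_nhds (x := Complex.I)).mul h2')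
      simp only [Complex.ofReal_zero, mul_zero, add_zero] at this
      refine this.congr fun ξ => ?_
      simp only [Function.comp_apply, hzdef]
      push_cast
      ring
    have h6 := (continuous_norm.tendsto _).comp hzc
    have heq : ‖((a / μ ^ 2 : ℝ) : ℂ)‖ = a / μ ^ 2 := by
      rw [Complex.norm_real, Real.norm_eq_abs, abs_of_pos (by positivity)]
    rw [heq] at h6
    exact h6.congr fun ξ => rfl
  constructor
  · have := h5.div h4 one_ne_zero
    rw [div_one] at this
    exact this.congr fun ξ => (hkey ξ).symm
  · -- boundedness
    set s : ℝ := 1 / μ ^ 2 with hsdef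
    have hs : μ ^ 2 * s = 1 := by rw [hsdef]; field_simp
    have hspos : 0 < s := by positivity
    set d : ℝ := 1 - Real.exp (-(ν * t₀)) with hddef
    have hdpos : 0 < d := by
      have : Real.exp (-(ν * t₀)) < 1 := by
        rw [Real.exp_lt_one_iff]
        nlinarith
      simp only [hddef]; linarith
    set N : ℝ := a * s + ν + ‖β‖ * ((1 + s) / 2) with hNdef
    refine ⟨N / d, fun ξ => ?_⟩
    rw [hkey ξ]
    -- denominator bound
    have hde : d ≤ ‖1 - e ξ‖ := by
      have h6 : ‖e ξ‖ ≤ Real.exp (-(ν * t₀)) := by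
        rw [habse ξ]
        apply Real.exp_le_exp.mpr
        nlinarith [hxν ξ]
      have h7 : 1 - ‖e ξ‖ ≤ ‖1 - e ξ‖ := by
        have := norm_sub_norm_le (1 : ℂ) (e ξ)
        simpa using this
      simp only [hddef]; linarith
    -- numerator bound
    have hnum : ‖z ξ / ((c ξ : ℝ) : ℂ)‖ ≤ N := by
      rw [norm_div, Complex.norm_real, Real.norm_eq_abs, abs_of_pos (hcpos ξ)]
      rw [div_le_iff₀ (hcpos ξ)]
      have hz : ‖z ξ‖ ≤ x ξ + ‖β‖ * ‖ξ‖ := by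
        refine (norm_add_le _ _).trans ?_
        rw [Complex.norm_real, Real.norm_eq_abs, norm_mul, Complex.norm_I, one_mul, Complex.norm_real, Real.norm_eq_abs,
          abs_of_pos (hxpos ξ)]
        exact add_le_add_right (abs_real_inner_le_norm β ξ) _
      refine hz.trans ?_
      simp only [hxdef, hcdef, hNdef]
      have e1 : s * (μ ^ 2 * ‖ξ‖ ^ 2) = ‖ξ‖ ^ 2 := by
        calc s * (μ ^ 2 * ‖ξ‖ ^ 2) = (μ ^ 2 * s) * ‖ξ‖ ^ 2 := by ring
          _ = ‖ξ‖ ^ 2 := by rw [hs, one_mul]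
      have k1 : a * ‖ξ‖ ^ 2 ≤ a * s * (1 + μ ^ 2 * ‖ξ‖ ^ 2) := by
        have e2 : a * s * (1 + μ ^ 2 * ‖ξ‖ ^ 2) = a * s + a * (s * (μ ^ 2 * ‖ξ‖ ^ 2)) := by ring
        rw [e2, e1]
        have : 0 ≤ a * s := mul_nonneg ha.le hspos.le
        linarith
      have k2 : ν ≤ ν * (1 + μ ^ 2 * ‖ξ‖ ^ 2) := by
        have : 0 ≤ ν * (μ ^ 2 * ‖ξ‖ ^ 2) := by positivity
        linarith [this]
      have k3 : ‖β‖ * ‖ξ‖ ≤ ‖β‖ * ((1 + s) / 2) * (1 + μ ^ 2 * ‖ξ‖ ^ 2) := by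
        have h7 : ‖ξ‖ ≤ (1 + s) / 2 * (1 + μ ^ 2 * ‖ξ‖ ^ 2) := by
          have e3 : (1 + s) / 2 * (1 + μ ^ 2 * ‖ξ‖ ^ 2)
              = (1 + μ ^ 2 * ‖ξ‖ ^ 2 + s + s * (μ ^ 2 * ‖ξ‖ ^ 2)) / 2 := by ring
          rw [e3, e1]
          nlinarith [sq_nonneg (‖ξ‖ - 1), sq_nonneg (μ * ‖ξ‖), hspos]
        calc ‖β‖ * ‖ξ‖ ≤ ‖β‖ * ((1 + s) / 2 * (1 + μ ^ 2 * ‖ξ‖ ^ 2)) :=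
              mul_le_mul_of_nonneg_left h7 (norm_nonneg β)
          _ = ‖β‖ * ((1 + s) / 2) * (1 + μ ^ 2 * ‖ξ‖ ^ 2) := by ring
      have expand : (a * s + ν + ‖β‖ * ((1 + s) / 2)) * (1 + μ ^ 2 * ‖ξ‖ ^ 2)
          = a * s * (1 + μ ^ 2 * ‖ξ‖ ^ 2) + ν * (1 + μ ^ 2 * ‖ξ‖ ^ 2)
            + ‖β‖ * ((1 + s) / 2) * (1 + μ ^ 2 * ‖ξ‖ ^ 2) := by ring
      rw [expand]
      linarith
    have hN0 : 0 ≤ N := by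
      have : 0 ≤ ‖β‖ * ((1 + s) / 2) := mul_nonneg (norm_nonneg β) (by linarith)
      have : 0 ≤ a * s := mul_nonneg ha.le hspos.le
      simp only [hNdef]
      nlinarith [mul_nonneg ha.le hspos.le, mul_nonneg (norm_nonneg β) (by linarith : (0:ℝ) ≤ (1 + s) / 2), hν.le]
    exact div_le_div₀ hN0 hnum hdpos hde
end

section
/- Let p > 0 and 0 < μ < 1. Then for every s ≥ 0, (1 + s)^{−p/2} · (1 − 1/(1 + s μ²)) ≤ max{μ^p, μ²}. -/
theorem multiplier_sup_bound (p μ : ℝ) (hp : 0 < p) (hμ0 : 0 < μ) (hμ1 : μ < 1) :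
    ∀ s : ℝ, 0 ≤ s →
      (1 + s) ^ (-(p / 2)) * (1 - 1 / (1 + s * μ ^ 2)) ≤ max (μ ^ p) (μ ^ 2) := by
  intro s hs
  have hd : (0:ℝ) < 1 + s * μ ^ 2 := by positivity
  have h1s : (0:ℝ) < 1 + s := by linarith
  have hBeq : 1 - 1 / (1 + s * μ ^ 2) = s * μ ^ 2 / (1 + s * μ ^ 2) := by
    field_simp
    ring
  set B : ℝ := s * μ ^ 2 / (1 + s * μ ^ 2) with hBdef
  have hB0 : 0 ≤ B := by positivity
  have hB1 : B ≤ 1 := by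
    rw [hBdef, div_le_one hd]
    nlinarith
  have hK : B ≤ μ ^ 2 * (1 + s) := by
    calc B ≤ s * μ ^ 2 := by
          apply div_le_self (by positivity)
          nlinarith
      _ ≤ μ ^ 2 * (1 + s) := by nlinarith
  have hKdiv : (1 + s)⁻¹ * B ≤ μ ^ 2 := by
    rw [inv_mul_le_iff₀ h1s]
    linarith [hK, mul_comm (μ ^ 2) (1 + s)]
  rw [hBeq]
  rcases le_or_gt p 2 with hp2 | hp2
  · refine le_trans ?_ (le_max_left _ _)
    rcases eq_or_lt_of_le hB0 with hB | hB
    · rw [← hB, mul_zero]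
      positivity
    · have hrw : (1 + s) ^ (-(p / 2)) = ((1 + s)⁻¹) ^ (p / 2) := by
        rw [Real.rpow_neg h1s.le, ← Real.inv_rpow h1s.le]
      have hBle : B ≤ B ^ (p / 2) := by
        calc B = B ^ (1:ℝ) := (Real.rpow_one B).symm
          _ ≤ B ^ (p / 2) := Real.rpow_le_rpow_of_exponent_ge hB hB1 (by linarith)
      have hμp : μ ^ p = (μ ^ 2) ^ (p / 2) := by
        rw [← Real.rpow_natCast μ 2, ← Real.rpow_mul hμ0.le]
        norm_num
        congr 1
        ring
      calc (1 + s) ^ (-(p / 2)) * B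
          ≤ ((1 + s)⁻¹) ^ (p / 2) * B ^ (p / 2) := by
            rw [hrw]
            exact mul_le_mul_of_nonneg_left hBle (by positivity)
        _ = ((1 + s)⁻¹ * B) ^ (p / 2) := (Real.mul_rpow (by positivity) hB0).symm
        _ ≤ (μ ^ 2) ^ (p / 2) := Real.rpow_le_rpow (by positivity) hKdiv (by positivity)
        _ = μ ^ p := hμp.symm
  · refine le_trans ?_ (le_max_right _ _)
    have hA : (1 + s) ^ (-(p / 2)) ≤ (1 + s)⁻¹ := by
      rw [← Real.rpow_neg_one (1 + s)]
      exact Real.rpow_le_rpow_of_exponent_le (by linarith) (by linarith)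
    calc (1 + s) ^ (-(p / 2)) * B ≤ (1 + s)⁻¹ * B :=
          mul_le_mul_of_nonneg_right hA hB0
      _ ≤ μ ^ 2 := hKdiv
end

section
/- Let n ≥ 1, p > 0 and 0 < μ < 1. Let F : ℝⁿ → ℂ be measurable with ∫_{ℝⁿ} |F(ξ)|² (1 + ‖ξ‖²)^p dξ < ∞. Then (∫_{ℝⁿ} |F(ξ) − F(ξ)/(1 + μ²‖ξ‖²)|² dξ)^{1/2} ≤ max{μ^p, μ²} · (∫_{ℝⁿ} |F(ξ)|² (1 + ‖ξ‖²)^p dξ)^{1/2}. -/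
open MeasureTheory

lemma ptwise_key (p μ s : ℝ) (hp : 0 < p) (hμ0 : 0 < μ) (hμ1 : μ < 1) (hs : 0 ≤ s) :
    μ ^ 2 * s / (1 + μ ^ 2 * s) ≤ max (μ ^ p) (μ ^ 2) * (1 + s) ^ (p / 2) := by
  have ht0 : 0 ≤ μ ^ 2 * s := by positivity
  have h1t : (0:ℝ) < 1 + μ ^ 2 * s := by linarith
  have h1s : (1:ℝ) ≤ 1 + s := by linarith
  have hr1 : (1:ℝ) ≤ (1 + s) ^ (p / 2) := Real.one_le_rpow h1s (by positivity)
  have hμp : (0:ℝ) < μ ^ p := Real.rpow_pos_of_pos hμ0 _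
  rcases le_or_gt (μ ^ 2 * s) 1 with hcase | hcase
  · have hdiv : μ ^ 2 * s / (1 + μ ^ 2 * s) ≤ μ ^ 2 * s := by
      rw [div_le_iff₀ h1t]; nlinarith
    rcases le_or_gt s 1 with hs1 | hs1
    · calc μ ^ 2 * s / (1 + μ ^ 2 * s) ≤ μ ^ 2 * s := hdiv
        _ ≤ μ ^ 2 := by nlinarith
        _ ≤ max (μ ^ p) (μ ^ 2) := le_max_right _ _
        _ ≤ max (μ ^ p) (μ ^ 2) * (1 + s) ^ (p / 2) :=
            le_mul_of_one_le_right (le_trans hμp.le (le_max_left _ _)) hr1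
    · have hsp : 0 < s := by linarith
      have hspow : s ^ (p / 2) ≤ (1 + s) ^ (p / 2) :=
        Real.rpow_le_rpow hs (by linarith) (by positivity)
      rcases le_or_gt p 2 with hp2 | hp2
      · have hts : 0 < μ ^ 2 * s := by positivity
        have h1 : μ ^ 2 * s ≤ (μ ^ 2 * s) ^ (p / 2) := by
          calc μ ^ 2 * s = (μ ^ 2 * s) ^ (1:ℝ) := (Real.rpow_one _).symm
            _ ≤ (μ ^ 2 * s) ^ (p / 2) :=
                Real.rpow_le_rpow_of_exponent_ge hts hcase (by linarith)
        have heq : (μ ^ 2 * s) ^ (p / 2) = μ ^ p * s ^ (p / 2) := by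
          rw [Real.mul_rpow (by positivity) hs, ← Real.rpow_natCast μ 2,
            ← Real.rpow_mul hμ0.le, show ((2:ℕ):ℝ) * (p / 2) = p by push_cast; ring]
        calc μ ^ 2 * s / (1 + μ ^ 2 * s) ≤ μ ^ 2 * s := hdiv
          _ ≤ μ ^ p * s ^ (p / 2) := by rw [← heq]; exact h1
          _ ≤ μ ^ p * (1 + s) ^ (p / 2) := by
              exact mul_le_mul_of_nonneg_left hspow hμp.le
          _ ≤ max (μ ^ p) (μ ^ 2) * (1 + s) ^ (p / 2) :=
              mul_le_mul_of_nonneg_right (le_max_left _ _) (by positivity)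
      · have h1 : s ≤ s ^ (p / 2) := by
          calc s = s ^ (1:ℝ) := (Real.rpow_one _).symm
            _ ≤ s ^ (p / 2) := Real.rpow_le_rpow_of_exponent_le hs1.le (by linarith)
        calc μ ^ 2 * s / (1 + μ ^ 2 * s) ≤ μ ^ 2 * s := hdiv
          _ ≤ μ ^ 2 * s ^ (p / 2) := mul_le_mul_of_nonneg_left h1 (by positivity)
          _ ≤ μ ^ 2 * (1 + s) ^ (p / 2) := mul_le_mul_of_nonneg_left hspow (by positivity)
          _ ≤ max (μ ^ p) (μ ^ 2) * (1 + s) ^ (p / 2) :=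
              mul_le_mul_of_nonneg_right (le_max_right _ _) (by positivity)
  · have hLHS : μ ^ 2 * s / (1 + μ ^ 2 * s) ≤ 1 := by
      rw [div_le_one h1t]; linarith
    have h1sμ : (1:ℝ) / μ ^ 2 ≤ 1 + s := by
      rw [div_le_iff₀ (by positivity)]; nlinarith
    have h2 : ((1:ℝ) / μ ^ 2) ^ (p / 2) ≤ (1 + s) ^ (p / 2) :=
      Real.rpow_le_rpow (by positivity) h1sμ (by positivity)
    have heq : ((1:ℝ) / μ ^ 2) ^ (p / 2) = μ ^ (-p) := by
      rw [one_div, ← Real.rpow_natCast μ 2, ← Real.rpow_neg hμ0.le,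
        ← Real.rpow_mul hμ0.le, show -((2:ℕ):ℝ) * (p / 2) = -p by push_cast; ring]
    have h3 : (1:ℝ) ≤ μ ^ p * (1 + s) ^ (p / 2) := by
      have := mul_le_mul_of_nonneg_left h2 hμp.le
      rw [heq, ← Real.rpow_add hμ0] at this
      simpa using this
    calc μ ^ 2 * s / (1 + μ ^ 2 * s) ≤ 1 := hLHS
      _ ≤ μ ^ p * (1 + s) ^ (p / 2) := h3
      _ ≤ max (μ ^ p) (μ ^ 2) * (1 + s) ^ (p / 2) :=
          mul_le_mul_of_nonneg_right (le_max_left _ _) (by positivity)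

theorem regularization_bias_bound
    (n : ℕ) (hn : 1 ≤ n) (p μ : ℝ) (hp : 0 < p) (hμ0 : 0 < μ) (hμ1 : μ < 1)
    (F : EuclideanSpace ℝ (Fin n) → ℂ) (hFm : Measurable F)
    (hFp : Integrable (fun ξ : EuclideanSpace ℝ (Fin n) =>
      ‖F ξ‖ ^ 2 * (1 + ‖ξ‖ ^ 2) ^ p)) :
    Real.sqrt (∫ ξ : EuclideanSpace ℝ (Fin n),
        ‖F ξ - F ξ / ((1 + μ ^ 2 * ‖ξ‖ ^ 2 : ℝ) : ℂ)‖ ^ 2) ≤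
      max (μ ^ p) (μ ^ 2) *
        Real.sqrt (∫ ξ : EuclideanSpace ℝ (Fin n),
          ‖F ξ‖ ^ 2 * (1 + ‖ξ‖ ^ 2) ^ p) := by
  set M : ℝ := max (μ ^ p) (μ ^ 2) with hM
  have hM0 : 0 < M := lt_of_lt_of_le (Real.rpow_pos_of_pos hμ0 p) (le_max_left _ _)
  set g : EuclideanSpace ℝ (Fin n) → ℝ := fun ξ =>
    ‖F ξ - F ξ / ((1 + μ ^ 2 * ‖ξ‖ ^ 2 : ℝ) : ℂ)‖ ^ 2 with hg
  set h : EuclideanSpace ℝ (Fin n) → ℝ := fun ξ =>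
    ‖F ξ‖ ^ 2 * (1 + ‖ξ‖ ^ 2) ^ p with hh
  -- pointwise bound
  have habs : ∀ ξ : EuclideanSpace ℝ (Fin n),
      ‖F ξ - F ξ / ((1 + μ ^ 2 * ‖ξ‖ ^ 2 : ℝ) : ℂ)‖ =
      ‖F ξ‖ * (μ ^ 2 * ‖ξ‖ ^ 2 / (1 + μ ^ 2 * ‖ξ‖ ^ 2)) := by
    intro ξ
    have hc : (1 + μ ^ 2 * ‖ξ‖ ^ 2 : ℝ) ≠ 0 := by positivity
    have hcC : ((1 + μ ^ 2 * ‖ξ‖ ^ 2 : ℝ) : ℂ) ≠ 0 := by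
      exact_mod_cast Complex.ofReal_ne_zero.mpr hc
    have key : F ξ - F ξ / ((1 + μ ^ 2 * ‖ξ‖ ^ 2 : ℝ) : ℂ) =
        F ξ * (((μ ^ 2 * ‖ξ‖ ^ 2 / (1 + μ ^ 2 * ‖ξ‖ ^ 2) : ℝ)) : ℂ) := by
      have hcC' : (1 + (μ:ℂ) ^ 2 * (‖ξ‖:ℂ) ^ 2) ≠ 0 := by exact_mod_cast hc
      push_cast
      field_simp
      ring
    rw [key, norm_mul, Complex.norm_real, Real.norm_eq_abs, abs_of_nonneg (by positivity)]
  have hptw : ∀ ξ, g ξ ≤ M ^ 2 * h ξ := by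
    intro ξ
    have hkey := ptwise_key p μ (‖ξ‖ ^ 2) hp hμ0 hμ1 (by positivity)
    have h0 : 0 ≤ μ ^ 2 * ‖ξ‖ ^ 2 / (1 + μ ^ 2 * ‖ξ‖ ^ 2) := by positivity
    have hsq : (μ ^ 2 * ‖ξ‖ ^ 2 / (1 + μ ^ 2 * ‖ξ‖ ^ 2)) ^ 2 ≤
        M ^ 2 * (1 + ‖ξ‖ ^ 2) ^ p := by
      have := mul_le_mul hkey hkey h0 (by positivity)
      calc (μ ^ 2 * ‖ξ‖ ^ 2 / (1 + μ ^ 2 * ‖ξ‖ ^ 2)) ^ 2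
          = (μ ^ 2 * ‖ξ‖ ^ 2 / (1 + μ ^ 2 * ‖ξ‖ ^ 2)) *
            (μ ^ 2 * ‖ξ‖ ^ 2 / (1 + μ ^ 2 * ‖ξ‖ ^ 2)) := sq _
        _ ≤ (M * (1 + ‖ξ‖ ^ 2) ^ (p / 2)) * (M * (1 + ‖ξ‖ ^ 2) ^ (p / 2)) := this
        _ = M ^ 2 * ((1 + ‖ξ‖ ^ 2) ^ (p / 2) * (1 + ‖ξ‖ ^ 2) ^ (p / 2)) := by ring
        _ = M ^ 2 * (1 + ‖ξ‖ ^ 2) ^ p := by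
            rw [← Real.rpow_add (by positivity)]
            norm_num
    simp only [hg, hh, habs ξ]
    calc (‖F ξ‖ * (μ ^ 2 * ‖ξ‖ ^ 2 / (1 + μ ^ 2 * ‖ξ‖ ^ 2))) ^ 2
        = ‖F ξ‖ ^ 2 * (μ ^ 2 * ‖ξ‖ ^ 2 / (1 + μ ^ 2 * ‖ξ‖ ^ 2)) ^ 2 := by ring
      _ ≤ ‖F ξ‖ ^ 2 * (M ^ 2 * (1 + ‖ξ‖ ^ 2) ^ p) :=
          mul_le_mul_of_nonneg_left hsq (by positivity)
      _ = M ^ 2 * (‖F ξ‖ ^ 2 * (1 + ‖ξ‖ ^ 2) ^ p) := by ring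
  -- integrability of g
  have hgm : Measurable g := by
    apply Measurable.pow_const
    have hm : Measurable (fun ξ : EuclideanSpace ℝ (Fin n) =>
        F ξ - F ξ / ((1 + μ ^ 2 * ‖ξ‖ ^ 2 : ℝ) : ℂ)) :=
      hFm.sub (hFm.div (Complex.measurable_ofReal.comp (by fun_prop)))
    simpa using hm.norm
  have hgint : Integrable g := by
    refine (hFp.const_mul (M ^ 2)).mono' hgm.aestronglyMeasurable ?_
    filter_upwards with ξ
    rw [Real.norm_eq_abs, abs_of_nonneg (by positivity)]
    exact hptw ξ
  have hint : ∫ ξ, g ξ ≤ M ^ 2 * ∫ ξ, h ξ := by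
    calc ∫ ξ, g ξ ≤ ∫ ξ, M ^ 2 * h ξ :=
        integral_mono hgint (hFp.const_mul _) hptw
      _ = M ^ 2 * ∫ ξ, h ξ := integral_const_mul _ _
  calc Real.sqrt (∫ ξ, g ξ) ≤ Real.sqrt (M ^ 2 * ∫ ξ, h ξ) := Real.sqrt_le_sqrt hint
    _ = M * Real.sqrt (∫ ξ, h ξ) := by
        rw [Real.sqrt_mul (by positivity), Real.sqrt_sq hM0.le]
end

section
/- Let n ≥ 1, let α², ν, t₀ > 0 be real constants, let β ∈ ℝⁿ, and let 0 < μ < 1. Let G : ℝⁿ → ℂ be square integrable. Then (∫_{ℝⁿ} |Λ(ξ) G(ξ)/(1 + μ²‖ξ‖²)|² dξ)^{1/2} ≤ (2M/μ²) · (∫_{ℝⁿ} |G(ξ)|² dξ)^{1/2}. -/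
open MeasureTheory

lemma exp_neg_le_one_sub_half' (s : ℝ) (hs0 : 0 < s) (hs1 : s ≤ 1) :
    s / 2 ≤ 1 - Real.exp (-s) := by
  have h1 : s + 1 ≤ Real.exp s := Real.add_one_le_exp s
  have h2 : Real.exp (-s) = (Real.exp s)⁻¹ := by rw [Real.exp_neg]
  have h3 : (Real.exp s)⁻¹ ≤ (s + 1)⁻¹ := inv_anti₀ (by linarith) h1
  have h4 : (s + 1)⁻¹ ≤ 1 - s / 2 := by
    rw [inv_le_iff_one_le_mul₀ (by linarith)]
    nlinarith
  rw [h2]; linarith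

lemma real_bound' (a ν t₀ K M x y r : ℝ) (ha : 0 < a) (hν : 0 < ν) (ht : 0 < t₀)
    (hK : 0 ≤ K) (hr : 0 ≤ r) (hx : x = a * r ^ 2 + ν) (hy : |y| ≤ K * r)
    (hM1 : 1 / t₀ + K / (2 * ν * t₀) ≤ M) (hM2 : ν + a + K / 2 ≤ M) :
    (x + |y|) / (1 - Real.exp (-(x * t₀))) ≤ 2 * M * (1 + r ^ 2) := by
  have hxν : ν ≤ x := by nlinarith
  have hxpos : 0 < x := by linarith
  have hs : 0 < x * t₀ := by positivity
  have hnum : 0 ≤ x + |y| := by positivity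
  have hM0 : 0 < M := by nlinarith
  have h1 : ν + K / 2 ≤ M * (ν * t₀) := by
    have := mul_le_mul_of_nonneg_right hM1 (show (0:ℝ) ≤ ν * t₀ by positivity)
    have he : (1 / t₀ + K / (2 * ν * t₀)) * (ν * t₀) = ν + K / 2 := by
      field_simp
    linarith [he ▸ this]
  rcases le_or_gt (x * t₀) 1 with hcase | hcase
  · have hD : x * t₀ / 2 ≤ 1 - Real.exp (-(x * t₀)) := exp_neg_le_one_sub_half' _ hs hcase
    have hstep : (x + |y|) / (1 - Real.exp (-(x * t₀))) ≤ (x + |y|) / (x * t₀ / 2) :=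
      div_le_div_of_nonneg_left hnum (by positivity) hD
    refine hstep.trans ?_
    rw [div_le_iff₀ (by positivity)]
    have key : ν * (x + |y|) ≤ ν * (2 * M * (1 + r ^ 2) * (x * t₀ / 2)) := by
      nlinarith [mul_le_mul_of_nonneg_right h1 (show (0:ℝ) ≤ x * (1 + r^2) by positivity),
        mul_nonneg (mul_nonneg hK hν.le) (sq_nonneg (r - 1)),
        mul_nonneg (sub_nonneg.2 hxν) (mul_nonneg hK (show (0:ℝ) ≤ 1 + r^2 by positivity)),
        mul_le_mul_of_nonneg_left hy hν.le,
        mul_nonneg (mul_nonneg hν.le hxpos.le) (sq_nonneg r)]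
    exact le_of_mul_le_mul_left key hν
  · have hexp : Real.exp (-(x * t₀)) ≤ Real.exp (-1) := by
      apply Real.exp_le_exp.2; linarith
    have he1 : Real.exp (-1 : ℝ) ≤ 1 / 2 := by
      have h2 : (2:ℝ) ≤ Real.exp 1 := by have := Real.add_one_le_exp (1:ℝ); linarith
      rw [Real.exp_neg, inv_le_iff_one_le_mul₀ (by positivity)]
      linarith
    have hD : (1:ℝ) / 2 ≤ 1 - Real.exp (-(x * t₀)) := by linarith
    have hstep : (x + |y|) / (1 - Real.exp (-(x * t₀))) ≤ (x + |y|) / (1 / 2) :=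
      div_le_div_of_nonneg_left hnum (by norm_num) hD
    refine hstep.trans ?_
    rw [div_le_iff₀ (by norm_num)]
    nlinarith [mul_nonneg hK (sq_nonneg (r - 1)), sq_nonneg r]

lemma abs_quotient_le' (x y t₀ : ℝ) (hx : 0 < x) (ht : 0 < t₀) :
    ‖((x:ℂ) + Complex.I * (y:ℂ)) /
        (1 - Complex.exp (-(((x:ℂ) + Complex.I * (y:ℂ)) * (t₀:ℂ))))‖ ≤
      (x + |y|) / (1 - Real.exp (-(x * t₀))) := by
  set z : ℂ := (x:ℂ) + Complex.I * (y:ℂ) with hz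
  have hre : z.re = x := by simp [hz]
  have him : z.im = y := by simp [hz]
  have habsz : ‖z‖ ≤ x + |y| := by
    have h := Complex.norm_le_abs_re_add_abs_im z
    rw [hre, him, abs_of_pos hx] at h
    exact h
  have hexp : ‖Complex.exp (-(z * (t₀:ℂ)))‖ = Real.exp (-(x * t₀)) := by
    rw [Complex.norm_exp]
    congr 1
    simp [hre]
  have hD : 0 < 1 - Real.exp (-(x * t₀)) := by
    have : Real.exp (-(x * t₀)) < 1 := by
      rw [Real.exp_lt_one_iff]; nlinarith
    linarith
  have hden : 1 - Real.exp (-(x * t₀)) ≤ ‖1 - Complex.exp (-(z * (t₀:ℂ)))‖ := by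
    have := norm_sub_norm_le (1 : ℂ) (Complex.exp (-(z * (t₀:ℂ))))
    simpa [hexp] using this
  rw [norm_div]
  exact div_le_div₀ (by positivity) habsz hD hden

theorem regularized_operator_L2_bound
    (n : ℕ) (hn : 1 ≤ n) (a ν t₀ μ : ℝ)
    (ha : 0 < a) (hν : 0 < ν) (ht : 0 < t₀) (hμ0 : 0 < μ) (hμ1 : μ < 1)
    (β : EuclideanSpace ℝ (Fin n))
    (Λ : EuclideanSpace ℝ (Fin n) → ℂ)
    (hΛ : ∀ ξ : EuclideanSpace ℝ (Fin n),
      Λ ξ = (((a * ‖ξ‖ ^ 2 + ν : ℝ) : ℂ) + Complex.I * ((inner ℝ β ξ : ℝ) : ℂ)) /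
        (1 - Complex.exp (-((((a * ‖ξ‖ ^ 2 + ν : ℝ) : ℂ) + Complex.I * ((inner ℝ β ξ : ℝ) : ℂ)) * (t₀ : ℂ)))))
    (B M : ℝ)
    (hB : B = ⨆ j : Fin n, |β j|)
    (hM : M = max (1 / t₀ + Real.sqrt n * B / (2 * ν * t₀)) (ν + a + Real.sqrt n * B / 2))
    (G : EuclideanSpace ℝ (Fin n) → ℂ) (hGm : Measurable G)
    (hG2 : Integrable (fun ξ : EuclideanSpace ℝ (Fin n) => ‖G ξ‖ ^ 2)) :
    Real.sqrt (∫ ξ : EuclideanSpace ℝ (Fin n),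
        ‖Λ ξ * G ξ / ((1 + μ ^ 2 * ‖ξ‖ ^ 2 : ℝ) : ℂ)‖ ^ 2) ≤
      2 * M / μ ^ 2 *
        Real.sqrt (∫ ξ : EuclideanSpace ℝ (Fin n), ‖G ξ‖ ^ 2) := by
  haveI : Nonempty (Fin n) := ⟨⟨0, hn⟩⟩
  set K : ℝ := Real.sqrt n * B with hKdef
  -- B ≥ 0
  have hB0 : 0 ≤ B := by
    rw [hB]
    exact le_trans (abs_nonneg (β ⟨0, hn⟩))
      (le_ciSup (f := fun j : Fin n => |β j|) (Set.Finite.bddAbove (Set.finite_range _)) ⟨0, hn⟩)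
  have hK0 : 0 ≤ K := by positivity
  -- ‖β‖ ≤ K
  have hβnorm : ‖β‖ ≤ K := by
    rw [EuclideanSpace.norm_eq]
    have hsum : (∑ i, ‖β i‖ ^ 2) ≤ (n : ℝ) * B ^ 2 := by
      calc (∑ i, ‖β i‖ ^ 2) ≤ ∑ _i : Fin n, B ^ 2 := by
            apply Finset.sum_le_sum
            intro i _
            have hi : |β i| ≤ B := by
              rw [hB]
              exact le_ciSup (f := fun j : Fin n => |β j|) (Set.Finite.bddAbove (Set.finite_range _)) i
            have : ‖β i‖ = |β i| := rfl
            rw [this]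
            exact pow_le_pow_left₀ (abs_nonneg _) hi 2
        _ = (n : ℝ) * B ^ 2 := by simp [Finset.sum_const, mul_comm]
    calc Real.sqrt (∑ i, ‖β i‖ ^ 2) ≤ Real.sqrt ((n : ℝ) * B ^ 2) := Real.sqrt_le_sqrt hsum
      _ = Real.sqrt n * B := by
          rw [Real.sqrt_mul (Nat.cast_nonneg n), Real.sqrt_sq hB0]
  have hM2 : ν + a + K / 2 ≤ M := by rw [hM]; exact le_max_right _ _
  have hM1 : 1 / t₀ + K / (2 * ν * t₀) ≤ M := by rw [hM]; exact le_max_left _ _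
  have hM0 : 0 < M := by nlinarith
  set C : ℝ := 2 * M / μ ^ 2 with hCdef
  have hC0 : 0 ≤ C := by positivity
  -- pointwise bound on Λ
  have hΛbound : ∀ ξ : EuclideanSpace ℝ (Fin n),
      ‖Λ ξ‖ ≤ 2 * M * (1 + ‖ξ‖ ^ 2) := by
    intro ξ
    rw [hΛ ξ]
    have hy : |(inner ℝ β ξ : ℝ)| ≤ K * ‖ξ‖ := by
      calc |(inner ℝ β ξ : ℝ)| ≤ ‖β‖ * ‖ξ‖ := abs_real_inner_le_norm β ξ
        _ ≤ K * ‖ξ‖ := mul_le_mul_of_nonneg_right hβnorm (norm_nonneg ξ)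
    have hxpos : 0 < a * ‖ξ‖ ^ 2 + ν := by positivity
    calc ‖_‖ ≤ (a * ‖ξ‖ ^ 2 + ν + |(inner ℝ β ξ : ℝ)|) /
          (1 - Real.exp (-((a * ‖ξ‖ ^ 2 + ν) * t₀))) :=
            abs_quotient_le' (a * ‖ξ‖ ^ 2 + ν) (inner ℝ β ξ) t₀ hxpos ht
      _ ≤ 2 * M * (1 + ‖ξ‖ ^ 2) :=
          real_bound' a ν t₀ K M (a * ‖ξ‖ ^ 2 + ν) (inner ℝ β ξ) ‖ξ‖
            ha hν ht hK0 (norm_nonneg ξ) rfl hy hM1 hM2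
  -- pointwise bound on the full quotient
  have hpt : ∀ ξ : EuclideanSpace ℝ (Fin n),
      ‖Λ ξ * G ξ / ((1 + μ ^ 2 * ‖ξ‖ ^ 2 : ℝ) : ℂ)‖ ^ 2 ≤
        C ^ 2 * ‖G ξ‖ ^ 2 := by
    intro ξ
    have hdpos : (0:ℝ) < 1 + μ ^ 2 * ‖ξ‖ ^ 2 := by positivity
    have habsd : ‖((1 + μ ^ 2 * ‖ξ‖ ^ 2 : ℝ) : ℂ)‖ = 1 + μ ^ 2 * ‖ξ‖ ^ 2 := by
      rw [Complex.norm_real, Real.norm_eq_abs, abs_of_pos hdpos]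
    have hfrac : ‖Λ ξ‖ / (1 + μ ^ 2 * ‖ξ‖ ^ 2) ≤ C := by
      rw [div_le_iff₀ hdpos, hCdef]
      have h1 : ‖Λ ξ‖ ≤ 2 * M * (1 + ‖ξ‖ ^ 2) := hΛbound ξ
      calc ‖Λ ξ‖ ≤ 2 * M * (1 + ‖ξ‖ ^ 2) := h1
        _ = 2 * M * (1 + ‖ξ‖ ^ 2) := rfl
        _ ≤ 2 * M / μ ^ 2 * (1 + μ ^ 2 * ‖ξ‖ ^ 2) := by
            rw [div_mul_eq_mul_div, le_div_iff₀ (by positivity)]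
            nlinarith [mul_nonneg hM0.le (show (0:ℝ) ≤ 1 - μ ^ 2 by nlinarith)]
    have heq : ‖Λ ξ * G ξ / ((1 + μ ^ 2 * ‖ξ‖ ^ 2 : ℝ) : ℂ)‖ =
        ‖Λ ξ‖ / (1 + μ ^ 2 * ‖ξ‖ ^ 2) * ‖G ξ‖ := by
      rw [norm_div, norm_mul, habsd]
      ring
    calc ‖Λ ξ * G ξ / ((1 + μ ^ 2 * ‖ξ‖ ^ 2 : ℝ) : ℂ)‖ ^ 2
        = (‖Λ ξ‖ / (1 + μ ^ 2 * ‖ξ‖ ^ 2) * ‖G ξ‖) ^ 2 := by rw [heq]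
      _ ≤ (C * ‖G ξ‖) ^ 2 := by
          apply pow_le_pow_left₀ (by positivity)
          exact mul_le_mul_of_nonneg_right hfrac (norm_nonneg _)
      _ = C ^ 2 * ‖G ξ‖ ^ 2 := by ring
  -- measurability
  have hnumC : Continuous (fun ξ : EuclideanSpace ℝ (Fin n) =>
      (((a * ‖ξ‖ ^ 2 + ν : ℝ) : ℂ) + Complex.I * ((inner ℝ β ξ : ℝ) : ℂ))) := by
    apply Continuous.add
    · exact Complex.continuous_ofReal.comp
        ((continuous_const.mul (continuous_norm.pow 2)).add continuous_const)
    · exact continuous_const.mul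
        (Complex.continuous_ofReal.comp (continuous_const.inner continuous_id))
  have hdenC : Continuous (fun ξ : EuclideanSpace ℝ (Fin n) =>
      (1 : ℂ) - Complex.exp (-((((a * ‖ξ‖ ^ 2 + ν : ℝ) : ℂ) + Complex.I * ((inner ℝ β ξ : ℝ) : ℂ)) * (t₀ : ℂ)))) :=
    continuous_const.sub (Complex.continuous_exp.comp ((hnumC.mul continuous_const).neg))
  have hΛm : Measurable Λ := by
    have hf : Λ = fun ξ => (((a * ‖ξ‖ ^ 2 + ν : ℝ) : ℂ) + Complex.I * ((inner ℝ β ξ : ℝ) : ℂ)) /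
        (1 - Complex.exp (-((((a * ‖ξ‖ ^ 2 + ν : ℝ) : ℂ) + Complex.I * ((inner ℝ β ξ : ℝ) : ℂ)) * (t₀ : ℂ)))) :=
      funext hΛ
    rw [hf]
    exact hnumC.measurable.div hdenC.measurable
  have hdm : Measurable (fun ξ : EuclideanSpace ℝ (Fin n) => ((1 + μ ^ 2 * ‖ξ‖ ^ 2 : ℝ) : ℂ)) :=
    (Complex.continuous_ofReal.comp
      (continuous_const.add (continuous_const.mul (continuous_norm.pow 2)))).measurable
  have hFm : Measurable (fun ξ : EuclideanSpace ℝ (Fin n) =>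
      ‖Λ ξ * G ξ / ((1 + μ ^ 2 * ‖ξ‖ ^ 2 : ℝ) : ℂ)‖ ^ 2) :=
    (continuous_norm.measurable.comp ((hΛm.mul hGm).div hdm)).pow_const 2
  have hFint : Integrable (fun ξ : EuclideanSpace ℝ (Fin n) =>
      ‖Λ ξ * G ξ / ((1 + μ ^ 2 * ‖ξ‖ ^ 2 : ℝ) : ℂ)‖ ^ 2) := by
    apply (hG2.const_mul (C ^ 2)).mono' hFm.aestronglyMeasurable
    filter_upwards with ξ
    rw [Real.norm_eq_abs, abs_of_nonneg (by positivity)]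
    exact hpt ξ
  have hint : (∫ ξ : EuclideanSpace ℝ (Fin n),
      ‖Λ ξ * G ξ / ((1 + μ ^ 2 * ‖ξ‖ ^ 2 : ℝ) : ℂ)‖ ^ 2) ≤
      C ^ 2 * ∫ ξ : EuclideanSpace ℝ (Fin n), ‖G ξ‖ ^ 2 := by
    rw [← integral_const_mul]
    exact integral_mono hFint (hG2.const_mul _) hpt
  calc Real.sqrt (∫ ξ : EuclideanSpace ℝ (Fin n),
        ‖Λ ξ * G ξ / ((1 + μ ^ 2 * ‖ξ‖ ^ 2 : ℝ) : ℂ)‖ ^ 2)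
      ≤ Real.sqrt (C ^ 2 * ∫ ξ : EuclideanSpace ℝ (Fin n), ‖G ξ‖ ^ 2) :=
        Real.sqrt_le_sqrt hint
    _ = C * Real.sqrt (∫ ξ : EuclideanSpace ℝ (Fin n), ‖G ξ‖ ^ 2) := by
        rw [Real.sqrt_mul (sq_nonneg C), Real.sqrt_sq hC0]
end

section
/- Let n ≥ 1, let α², ν, t₀ > 0 be real constants, let β ∈ ℝⁿ, let p > 0, δ > 0, and 0 < μ < 1. Let F, Y, Y_δ : ℝⁿ → ℂ be measurable, square integrable functions such that F(ξ) = Λ(ξ)Y(ξ) for almost every ξ, ∫_{ℝⁿ} |F(ξ)|²(1 + ‖ξ‖²)^p dξ < ∞, and (∫_{ℝⁿ} |Y(ξ) − Y_δ(ξ)|² dξ)^{1/2} ≤ δ. Then (∫_{ℝⁿ} |F(ξ) − Λ(ξ)Y_δ(ξ)/(1 + μ²‖ξ‖²)|² dξ)^{1/2} ≤ max{μ^p, μ²} · (∫_{ℝⁿ} |F(ξ)|²(1 + ‖ξ‖²)^p dξ)^{1/2} + (2δ/μ²) · M. -/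
open MeasureTheory

section helpers

lemma eLpNorm_two_sqrt' {α : Type*} [MeasurableSpace α] {μ : Measure α}
    {H : Type*} [NormedAddCommGroup H] {f : α → H} (hf : MemLp f 2 μ) :
    eLpNorm f 2 μ = ENNReal.ofReal (Real.sqrt (∫ a, ‖f a‖ ^ 2 ∂μ)) := by
  rw [hf.eLpNorm_eq_integral_rpow_norm two_ne_zero ENNReal.ofNat_ne_top]
  congr 1
  rw [Real.sqrt_eq_rpow]
  norm_num


lemma Lambda_bound (n : ℕ) (hn : 1 ≤ n) (a ν t₀ : ℝ)
    (ha : 0 < a) (hν : 0 < ν) (ht : 0 < t₀)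
    (β : EuclideanSpace ℝ (Fin n)) (B M : ℝ)
    (hB : B = ⨆ j : Fin n, |β j|)
    (hM : M = max (1 / t₀ + Real.sqrt n * B / (2 * ν * t₀)) (ν + a + Real.sqrt n * B / 2))
    (ξ : EuclideanSpace ℝ (Fin n)) :
    ‖(((a * ‖ξ‖ ^ 2 + ν : ℝ) : ℂ) + Complex.I * ((inner ℝ β ξ : ℝ) : ℂ)) /
        (1 - Complex.exp (-((((a * ‖ξ‖ ^ 2 + ν : ℝ) : ℂ) + Complex.I * ((inner ℝ β ξ : ℝ) : ℂ)) * (t₀ : ℂ))))‖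
      ≤ 2 * M * (1 + ‖ξ‖ ^ 2) := by
  haveI : NeZero n := ⟨by omega⟩
  set x := ‖ξ‖ with hx
  have hx0 : 0 ≤ x := norm_nonneg _
  set s := x ^ 2 with hs
  have hs0 : 0 ≤ s := sq_nonneg _
  set r := a * s + ν with hr
  have hr0 : 0 < r := by positivity
  have hνr : ν ≤ r := by nlinarith
  set ip : ℝ := inner ℝ β ξ with hip
  set z : ℂ := ((r : ℝ) : ℂ) + Complex.I * ((ip : ℝ) : ℂ) with hz
  -- B bounds
  have hBub : ∀ j : Fin n, |β j| ≤ B := by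
    intro j
    rw [hB]
    exact le_ciSup (f := fun j : Fin n => |β j|) (Set.Finite.bddAbove (Set.finite_range _)) j
  have hB0 : 0 ≤ B := le_trans (abs_nonneg _) (hBub ⟨0, by omega⟩)
  have hβnorm : ‖β‖ ≤ Real.sqrt n * B := by
    rw [EuclideanSpace.norm_eq]
    have h1 : ∑ j, β j ^ 2 ≤ (n : ℝ) * B ^ 2 := by
      calc ∑ j, β j ^ 2 ≤ ∑ _j : Fin n, B ^ 2 := by
            apply Finset.sum_le_sum
            intro j _
            have := hBub j
            nlinarith [abs_nonneg (β j), sq_abs (β j)]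
        _ = (n : ℝ) * B ^ 2 := by simp [Finset.sum_const, nsmul_eq_mul]
    calc Real.sqrt (∑ j, ‖β j‖ ^ 2) = Real.sqrt (∑ j, β j ^ 2) := by
          simp [Real.norm_eq_abs, sq_abs]
      _ ≤ Real.sqrt ((n : ℝ) * B ^ 2) := Real.sqrt_le_sqrt h1
      _ = Real.sqrt n * B := by
          rw [Real.sqrt_mul (by positivity), Real.sqrt_sq hB0]
  have hipb : |ip| ≤ Real.sqrt n * B * x := by
    calc |ip| ≤ ‖β‖ * ‖ξ‖ := abs_real_inner_le_norm β ξ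
      _ ≤ Real.sqrt n * B * x := by
          apply mul_le_mul_of_nonneg_right hβnorm hx0
  set K := Real.sqrt n * B with hK
  have hK0 : 0 ≤ K := by positivity
  clear_value x s r ip z K
  -- numerator bound
  have hznum : ‖z‖ ≤ r + K * x := by
    have hre : z.re = r := by simp [hz]
    have him : z.im = ip := by simp [hz]
    calc ‖z‖ ≤ |z.re| + |z.im| := Complex.norm_le_abs_re_add_abs_im z
      _ = |r| + |ip| := by rw [hre, him]
      _ ≤ r + K * x := by
          rw [abs_of_pos hr0]
          linarith [hipb]
  -- denominator bound
  have hexpabs : ‖Complex.exp (-(z * (t₀ : ℂ)))‖ = Real.exp (-(r * t₀)) := by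
    rw [Complex.norm_exp]
    congr 1
    simp [hz, Complex.mul_re]
  have hel1 : Real.exp (-(r * t₀)) < 1 := by
    apply Real.exp_lt_one_iff.mpr
    nlinarith
  have hden : 1 - Real.exp (-(r * t₀)) ≤ ‖1 - Complex.exp (-(z * (t₀ : ℂ)))‖ := by
    calc 1 - Real.exp (-(r * t₀))
        = ‖(1:ℂ)‖ - ‖Complex.exp (-(z * (t₀ : ℂ)))‖ := by
          rw [hexpabs, norm_one]
      _ ≤ ‖1 - Complex.exp (-(z * (t₀ : ℂ)))‖ :=
          norm_sub_norm_le _ _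
  have hdenpos : 0 < 1 - Real.exp (-(r * t₀)) := by linarith
  -- exp lower bound : 1 - e^{-rt₀} ≥ rt₀/(1+rt₀)
  have hexpineq : r * t₀ / (1 + r * t₀) ≤ 1 - Real.exp (-(r * t₀)) := by
    have h1 : Real.exp (-(r * t₀)) ≤ 1 / (1 + r * t₀) := by
      rw [Real.exp_neg, one_div]
      exact inv_anti₀ (by positivity) (by linarith [Real.add_one_le_exp (r * t₀)])
    have : 1 - 1 / (1 + r * t₀) = r * t₀ / (1 + r * t₀) := by
      field_simp
      ring
    linarith
  -- main chain
  have hmain : ‖z‖ / ‖1 - Complex.exp (-(z * (t₀ : ℂ)))‖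
      ≤ (r + K * x) * (1 + r * t₀) / (r * t₀) := by
    calc ‖z‖ / ‖1 - Complex.exp (-(z * (t₀ : ℂ)))‖
        ≤ (r + K * x) / (1 - Real.exp (-(r * t₀))) := by
          apply div_le_div₀ (by positivity) hznum hdenpos hden
      _ ≤ (r + K * x) / (r * t₀ / (1 + r * t₀)) := by
          apply div_le_div_of_nonneg_left (by positivity) (by positivity) hexpineq
      _ = (r + K * x) * (1 + r * t₀) / (r * t₀) := by
          field_simp
  -- final algebra
  have hM1 : 1 / t₀ + K / (2 * ν * t₀) ≤ M := by rw [hM, hK]; exact le_max_left _ _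
  have hM2 : ν + a + K / 2 ≤ M := by rw [hM, hK]; exact le_max_right _ _
  have h2x : 2 * x ≤ 1 + s := by nlinarith [sq_nonneg (x - 1)]
  have hfinal : (r + K * x) * (1 + r * t₀) / (r * t₀) ≤ 2 * M * (1 + s) := by
    have expand : (r + K * x) * (1 + r * t₀) / (r * t₀)
        = 1 / t₀ + r + (K * x) / (r * t₀) + K * x := by
      field_simp
      ring
    rw [expand]
    have b1 : (K * x) / (r * t₀) ≤ (K * ((1 + s) / 2)) / (ν * t₀) := by
      gcongr
      linarith
    have b2 : K * x ≤ K * ((1 + s) / 2) := by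
      apply mul_le_mul_of_nonneg_left (by linarith) hK0
    have h1 : (1 / t₀ + K / (2 * ν * t₀)) * (1 + s) ≤ M * (1 + s) := by
      apply mul_le_mul_of_nonneg_right hM1 (by linarith)
    have h2 : (ν + a + K / 2) * (1 + s) ≤ M * (1 + s) := by
      apply mul_le_mul_of_nonneg_right hM2 (by linarith)
    have hrw : (K * ((1 + s) / 2)) / (ν * t₀) = K / (2 * ν * t₀) * (1 + s) := by
      field_simp
    rw [hrw] at b1
    have e3 : 0 ≤ 1/t₀ * s := by positivity
    have e4 : 0 ≤ ν * s := by positivity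
    ring_nf at h1 h2 b1 b2 e3 e4 ⊢
    linarith [b1, b2, h1, h2, e3, e4, ha.le, hr]
  rw [norm_div]
  exact le_trans hmain hfinal


lemma filter_bound {p μ s : ℝ} (hp : 0 < p) (hμ0 : 0 < μ) (hμ1 : μ < 1) (hs : 0 ≤ s) :
    μ ^ 2 * s / (1 + μ ^ 2 * s) ≤ max (μ ^ p) (μ ^ 2) * (1 + s) ^ (p / 2) := by
  set w := μ ^ 2 * s with hw
  have hw0 : 0 ≤ w := by positivity
  have h1w : 0 < 1 + w := by linarith
  have hu1 : w / (1 + w) ≤ 1 := by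
    rw [div_le_one h1w]; linarith
  have huw : w / (1 + w) ≤ w := by
    rw [div_le_iff₀ h1w]; nlinarith
  have hu0 : 0 ≤ w / (1 + w) := by positivity
  have h1s : (1:ℝ) ≤ 1 + s := by linarith
  rcases le_or_gt 2 p with h2p | hp2
  · have : (1 + s) ≤ (1 + s) ^ (p / 2) := by
      calc (1 + s) = (1 + s) ^ (1:ℝ) := by rw [Real.rpow_one]
      _ ≤ (1 + s) ^ (p / 2) := by
          apply Real.rpow_le_rpow_of_exponent_le h1s; linarith
    calc w / (1 + w) ≤ w := huw
      _ ≤ μ ^ 2 * (1 + s) := by rw [hw]; nlinarith [sq_nonneg μ]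
      _ ≤ μ ^ 2 * (1 + s) ^ (p / 2) := by
          apply mul_le_mul_of_nonneg_left this (by positivity)
      _ ≤ max (μ ^ p) (μ ^ 2) * (1 + s) ^ (p / 2) := by
          apply mul_le_mul_of_nonneg_right (le_max_right _ _) (by positivity)
  · set u := w / (1 + w) with hu
    have key : u ≤ w ^ (p / 2) := by
      rcases eq_or_lt_of_le hu0 with h0 | h0
      · rw [← h0]; positivity
      · have : u = u ^ (p/2) * u ^ (1 - p/2) := by
          rw [← Real.rpow_add h0]; ring_nf; rw [Real.rpow_one]
        rw [this]
        have a1 : u ^ (p/2) ≤ w ^ (p/2) := Real.rpow_le_rpow hu0 huw (by positivity)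
        have a2 : u ^ (1 - p/2) ≤ 1 := Real.rpow_le_one hu0 hu1 (by linarith)
        calc u ^ (p/2) * u ^ (1 - p/2) ≤ w ^ (p/2) * 1 := by
              apply mul_le_mul a1 a2 (by positivity) (by positivity)
          _ = w ^ (p/2) := by ring
    have hwrw : w ^ (p/2) = μ ^ p * s ^ (p/2) := by
      rw [hw, Real.mul_rpow (by positivity) hs, ← Real.rpow_natCast μ 2,
        ← Real.rpow_mul hμ0.le]
      push_cast
      rw [show (2:ℝ) * (p/2) = p by ring]
    have hsp : s ^ (p/2) ≤ (1 + s) ^ (p/2) :=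
      Real.rpow_le_rpow hs (by linarith) (by positivity)
    calc u ≤ w ^ (p/2) := key
      _ = μ ^ p * s ^ (p/2) := hwrw
      _ ≤ μ ^ p * (1 + s) ^ (p/2) := by
          apply mul_le_mul_of_nonneg_left hsp (by positivity)
      _ ≤ max (μ ^ p) (μ ^ 2) * (1 + s) ^ (p / 2) := by
          apply mul_le_mul_of_nonneg_right (le_max_left _ _) (by positivity)

end helpers

theorem total_regularization_error_bound
    (n : ℕ) (hn : 1 ≤ n) (a ν t₀ p δ μ : ℝ)
    (ha : 0 < a) (hν : 0 < ν) (ht : 0 < t₀) (hp : 0 < p) (hδ : 0 < δ)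
    (hμ0 : 0 < μ) (hμ1 : μ < 1)
    (β : EuclideanSpace ℝ (Fin n))
    (Λ : EuclideanSpace ℝ (Fin n) → ℂ)
    (hΛ : ∀ ξ : EuclideanSpace ℝ (Fin n),
      Λ ξ = (((a * ‖ξ‖ ^ 2 + ν : ℝ) : ℂ) + Complex.I * ((inner ℝ β ξ : ℝ) : ℂ)) /
        (1 - Complex.exp (-((((a * ‖ξ‖ ^ 2 + ν : ℝ) : ℂ) + Complex.I * ((inner ℝ β ξ : ℝ) : ℂ)) * (t₀ : ℂ)))))
    (B M : ℝ)
    (hB : B = ⨆ j : Fin n, |β j|)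
    (hM : M = max (1 / t₀ + Real.sqrt n * B / (2 * ν * t₀)) (ν + a + Real.sqrt n * B / 2))
    (F Y Yδ : EuclideanSpace ℝ (Fin n) → ℂ)
    (hFm : Measurable F) (hYm : Measurable Y) (hYδm : Measurable Yδ)
    (hF2 : Integrable (fun ξ : EuclideanSpace ℝ (Fin n) => ‖F ξ‖ ^ 2))
    (hY2 : Integrable (fun ξ : EuclideanSpace ℝ (Fin n) => ‖Y ξ‖ ^ 2))
    (hYδ2 : Integrable (fun ξ : EuclideanSpace ℝ (Fin n) => ‖Yδ ξ‖ ^ 2))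
    (hFY : ∀ᵐ ξ : EuclideanSpace ℝ (Fin n), F ξ = Λ ξ * Y ξ)
    (hFp : Integrable (fun ξ : EuclideanSpace ℝ (Fin n) =>
      ‖F ξ‖ ^ 2 * (1 + ‖ξ‖ ^ 2) ^ p))
    (hnoise : Real.sqrt (∫ ξ : EuclideanSpace ℝ (Fin n),
      ‖Y ξ - Yδ ξ‖ ^ 2) ≤ δ) :
    Real.sqrt (∫ ξ : EuclideanSpace ℝ (Fin n),
        ‖F ξ - Λ ξ * Yδ ξ / ((1 + μ ^ 2 * ‖ξ‖ ^ 2 : ℝ) : ℂ)‖ ^ 2) ≤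
      max (μ ^ p) (μ ^ 2) *
        Real.sqrt (∫ ξ : EuclideanSpace ℝ (Fin n),
          ‖F ξ‖ ^ 2 * (1 + ‖ξ‖ ^ 2) ^ p) +
      2 * δ / μ ^ 2 * M := by
  classical
  have hM0 : 0 < M := by
    rw [hM]
    have hB0 : 0 ≤ B := by
      haveI : NeZero n := ⟨by omega⟩
      rw [hB]
      exact le_trans (abs_nonneg (β ⟨0, by omega⟩))
        (le_ciSup (f := fun j : Fin n => |β j|) (Set.Finite.bddAbove (Set.finite_range _)) ⟨0, by omega⟩)
    have : 0 < ν + a + Real.sqrt n * B / 2 := by positivity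
    exact lt_max_of_lt_right this
  set C := max (μ ^ p) (μ ^ 2) with hC
  have hC0 : 0 < C := lt_max_of_lt_right (by positivity)
  -- functions
  set g₁ : EuclideanSpace ℝ (Fin n) → ℂ := fun ξ =>
    F ξ * (((μ ^ 2 * ‖ξ‖ ^ 2 / (1 + μ ^ 2 * ‖ξ‖ ^ 2) : ℝ)) : ℂ) with hg₁
  set g₂ : EuclideanSpace ℝ (Fin n) → ℂ := fun ξ =>
    Λ ξ * (Y ξ - Yδ ξ) / ((1 + μ ^ 2 * ‖ξ‖ ^ 2 : ℝ) : ℂ) with hg₂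
  set h : EuclideanSpace ℝ (Fin n) → ℝ := fun ξ => ‖F ξ‖ * (1 + ‖ξ‖ ^ 2) ^ (p / 2) with hh
  set d : EuclideanSpace ℝ (Fin n) → ℂ := fun ξ => Y ξ - Yδ ξ with hd
  set L : EuclideanSpace ℝ (Fin n) → ℂ := fun ξ =>
    F ξ - Λ ξ * Yδ ξ / ((1 + μ ^ 2 * ‖ξ‖ ^ 2 : ℝ) : ℂ) with hL
  -- measurability
  have hcont1 : Continuous fun ξ : EuclideanSpace ℝ (Fin n) =>
      (((a * ‖ξ‖ ^ 2 + ν : ℝ) : ℂ) + Complex.I * ((inner ℝ β ξ : ℝ) : ℂ)) := by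
    apply Continuous.add
    · exact Complex.continuous_ofReal.comp (by fun_prop)
    · exact continuous_const.mul
        (Complex.continuous_ofReal.comp (Continuous.inner continuous_const continuous_id))
  have hΛm : Measurable Λ := by
    have hfe : Λ = fun ξ : EuclideanSpace ℝ (Fin n) => (((a * ‖ξ‖ ^ 2 + ν : ℝ) : ℂ) + Complex.I * ((inner ℝ β ξ : ℝ) : ℂ)) /
        (1 - Complex.exp (-((((a * ‖ξ‖ ^ 2 + ν : ℝ) : ℂ) + Complex.I * ((inner ℝ β ξ : ℝ) : ℂ)) * (t₀ : ℂ)))) :=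
      funext hΛ
    rw [hfe]
    exact hcont1.measurable.div
      ((continuous_const.sub (Complex.continuous_exp.comp ((hcont1.mul continuous_const).neg))).measurable)
  -- membership in L2
  have hFmem : MemLp F 2 (volume : Measure (EuclideanSpace ℝ (Fin n))) := by
    refine (memLp_two_iff_integrable_sq_norm hFm.aestronglyMeasurable).2 ?_
    simpa using hF2
  have hYmem : MemLp Y 2 (volume : Measure (EuclideanSpace ℝ (Fin n))) := by
    refine (memLp_two_iff_integrable_sq_norm hYm.aestronglyMeasurable).2 ?_
    simpa using hY2
  have hYδmem : MemLp Yδ 2 (volume : Measure (EuclideanSpace ℝ (Fin n))) := by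
    refine (memLp_two_iff_integrable_sq_norm hYδm.aestronglyMeasurable).2 ?_
    simpa using hYδ2
  have hdmem : MemLp d 2 (volume : Measure (EuclideanSpace ℝ (Fin n))) := hYmem.sub hYδmem
  have hdm : Measurable d := hYm.sub hYδm
  -- pointwise bound for g₁
  have hg₁bd : ∀ ξ : EuclideanSpace ℝ (Fin n), ‖g₁ ξ‖ ≤ C * h ξ := by
    intro ξ
    have hs0 : (0:ℝ) ≤ ‖ξ‖ ^ 2 := sq_nonneg _
    have hfb := filter_bound (s := ‖ξ‖ ^ 2) hp hμ0 hμ1 hs0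
    have h1w : (0:ℝ) < 1 + μ ^ 2 * ‖ξ‖ ^ 2 := by positivity
    have : ‖g₁ ξ‖ = ‖F ξ‖ * (μ ^ 2 * ‖ξ‖ ^ 2 / (1 + μ ^ 2 * ‖ξ‖ ^ 2)) := by
      rw [hg₁]
      simp only [norm_mul, Complex.norm_real, Real.norm_eq_abs]
      rw [abs_of_nonneg (by positivity)]
    rw [this, hh]
    calc ‖F ξ‖ * (μ ^ 2 * ‖ξ‖ ^ 2 / (1 + μ ^ 2 * ‖ξ‖ ^ 2))
        ≤ ‖F ξ‖ * (C * (1 + ‖ξ‖ ^ 2) ^ (p / 2)) :=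
          mul_le_mul_of_nonneg_left hfb (by positivity)
      _ = C * (‖F ξ‖ * (1 + ‖ξ‖ ^ 2) ^ (p / 2)) := by ring
  -- pointwise bound for g₂
  have hg₂bd : ∀ ξ : EuclideanSpace ℝ (Fin n), ‖g₂ ξ‖ ≤ (2 * M / μ ^ 2) * ‖d ξ‖ := by
    intro ξ
    have hΛbd : ‖Λ ξ‖ ≤ 2 * M * (1 + ‖ξ‖ ^ 2) := by
      rw [hΛ ξ]
      exact Lambda_bound n hn a ν t₀ ha hν ht β B M hB hM ξ
    have h1w : (0:ℝ) < 1 + μ ^ 2 * ‖ξ‖ ^ 2 := by positivity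
    have hsc : 2 * M * (1 + ‖ξ‖ ^ 2) / (1 + μ ^ 2 * ‖ξ‖ ^ 2) ≤ 2 * M / μ ^ 2 := by
      rw [div_le_div_iff₀ h1w (by positivity)]
      have hμs : μ ^ 2 * (1 + ‖ξ‖ ^ 2) ≤ 1 + μ ^ 2 * ‖ξ‖ ^ 2 := by nlinarith [sq_nonneg μ]
      nlinarith [hM0.le, sq_nonneg ‖ξ‖]
    have hnd : ‖d ξ‖ = ‖d ξ‖ := rfl
    have : ‖g₂ ξ‖ = ‖Λ ξ‖ * ‖d ξ‖ / (1 + μ ^ 2 * ‖ξ‖ ^ 2) := by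
      show ‖Λ ξ * d ξ / ((1 + μ ^ 2 * ‖ξ‖ ^ 2 : ℝ) : ℂ)‖ = _
      simp only [norm_div, norm_mul, Complex.norm_real, Real.norm_eq_abs]
      rw [abs_of_nonneg h1w.le]
    rw [this]
    calc ‖Λ ξ‖ * ‖d ξ‖ / (1 + μ ^ 2 * ‖ξ‖ ^ 2)
        ≤ (2 * M * (1 + ‖ξ‖ ^ 2)) * ‖d ξ‖ / (1 + μ ^ 2 * ‖ξ‖ ^ 2) := by
          gcongr
      _ = (2 * M * (1 + ‖ξ‖ ^ 2) / (1 + μ ^ 2 * ‖ξ‖ ^ 2)) * ‖d ξ‖ := by ring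
      _ ≤ (2 * M / μ ^ 2) * ‖d ξ‖ :=
          mul_le_mul_of_nonneg_right hsc (norm_nonneg _)
  -- a.e. decomposition
  have hae : ∀ᵐ ξ : EuclideanSpace ℝ (Fin n), L ξ = g₁ ξ + g₂ ξ := by
    filter_upwards [hFY] with ξ hξ
    have hD : ((1 + μ ^ 2 * ‖ξ‖ ^ 2 : ℝ) : ℂ) ≠ 0 := by
      exact_mod_cast (show (1 + μ ^ 2 * ‖ξ‖ ^ 2 : ℝ) ≠ 0 by positivity)
    show F ξ - Λ ξ * Yδ ξ / ((1 + μ ^ 2 * ‖ξ‖ ^ 2 : ℝ) : ℂ)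
        = F ξ * ((μ ^ 2 * ‖ξ‖ ^ 2 / (1 + μ ^ 2 * ‖ξ‖ ^ 2) : ℝ) : ℂ)
          + Λ ξ * (Y ξ - Yδ ξ) / ((1 + μ ^ 2 * ‖ξ‖ ^ 2 : ℝ) : ℂ)
    have hsplit : ((1 + μ ^ 2 * ‖ξ‖ ^ 2 : ℝ) : ℂ) = 1 + ((μ ^ 2 * ‖ξ‖ ^ 2 : ℝ) : ℂ) := by
      push_cast; ring
    rw [hξ, Complex.ofReal_div, hsplit]
    have hD2 : (1:ℂ) + (μ:ℂ) ^ 2 * (‖ξ‖:ℂ) ^ 2 ≠ 0 := by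
      rw [show (1:ℂ) + (μ:ℂ) ^ 2 * (‖ξ‖:ℂ) ^ 2 = ((1 + μ ^ 2 * ‖ξ‖ ^ 2 : ℝ) : ℂ) from by
        push_cast; ring]
      exact_mod_cast (show (1 + μ ^ 2 * ‖ξ‖ ^ 2 : ℝ) ≠ 0 by positivity)
    field_simp [hD2]
    ring
  -- membership of parts
  have hg₁m : AEStronglyMeasurable g₁ (volume : Measure (EuclideanSpace ℝ (Fin n))) := by
    apply hFm.aestronglyMeasurable.mul
    apply Continuous.aestronglyMeasurable
    refine Complex.continuous_ofReal.comp (Continuous.div (by fun_prop) (by fun_prop) ?_)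
    intro ξ
    positivity
  have hg₂m : AEStronglyMeasurable g₂ (volume : Measure (EuclideanSpace ℝ (Fin n))) := by
    apply Measurable.aestronglyMeasurable
    exact ((hΛm.mul hdm).div
      ((Complex.continuous_ofReal.comp (by fun_prop : Continuous fun ξ : EuclideanSpace ℝ (Fin n) => 1 + μ ^ 2 * ‖ξ‖ ^ 2)).measurable))
  have hhm : AEStronglyMeasurable h (volume : Measure (EuclideanSpace ℝ (Fin n))) := by
    apply AEStronglyMeasurable.mul
    · exact hFm.norm.aestronglyMeasurable
    · apply Continuous.aestronglyMeasurable
      exact Continuous.rpow_const (by fun_prop) (fun ξ => Or.inr (by positivity))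
  have hhmem : MemLp h 2 (volume : Measure (EuclideanSpace ℝ (Fin n))) := by
    refine (memLp_two_iff_integrable_sq_norm hhm).2 ?_
    have : (fun ξ : EuclideanSpace ℝ (Fin n) => ‖h ξ‖ ^ 2) = fun ξ : EuclideanSpace ℝ (Fin n) => ‖F ξ‖ ^ 2 * (1 + ‖ξ‖ ^ 2) ^ p := by
      funext ξ
      rw [hh]
      simp only [Real.norm_eq_abs]
      rw [abs_of_nonneg (by positivity), mul_pow, ← Real.rpow_natCast ((1 + ‖ξ‖ ^ 2) ^ (p/2)) 2,
        ← Real.rpow_mul (by positivity)]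
      norm_num
    rw [this]
    exact hFp
  have hg₁mem : MemLp g₁ 2 (volume : Measure (EuclideanSpace ℝ (Fin n))) :=
    (hhmem.const_mul C).of_le hg₁m
      (Filter.Eventually.of_forall fun ξ => by
        calc ‖g₁ ξ‖ ≤ C * h ξ := hg₁bd ξ
          _ ≤ ‖C * h ξ‖ := le_abs_self _)
  have hg₂mem : MemLp g₂ 2 (volume : Measure (EuclideanSpace ℝ (Fin n))) :=
    (hdmem.const_mul ((2 * M / μ ^ 2 : ℝ) : ℂ)).of_le hg₂m
      (Filter.Eventually.of_forall fun ξ => by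
        calc ‖g₂ ξ‖ ≤ (2 * M / μ ^ 2) * ‖d ξ‖ := hg₂bd ξ
          _ = ‖((2 * M / μ ^ 2 : ℝ) : ℂ) * d ξ‖ := by
              rw [norm_mul, Complex.norm_real, Real.norm_eq_abs,
                abs_of_nonneg (by positivity)])
  have hLmem : MemLp L 2 (volume : Measure (EuclideanSpace ℝ (Fin n))) :=
    MemLp.ae_eq (f := fun ξ : EuclideanSpace ℝ (Fin n) => g₁ ξ + g₂ ξ) (g := L)
      (hae.mono fun ξ hξ => hξ.symm) (hg₁mem.add hg₂mem)
  -- eLpNorm estimates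
  have e1 : eLpNorm g₁ 2 (volume : Measure (EuclideanSpace ℝ (Fin n))) ≤ ENNReal.ofReal C * eLpNorm h 2 (volume : Measure (EuclideanSpace ℝ (Fin n))) := by
    calc eLpNorm g₁ 2 (volume : Measure (EuclideanSpace ℝ (Fin n)))
        ≤ eLpNorm (fun ξ : EuclideanSpace ℝ (Fin n) => C * h ξ) 2 (volume : Measure (EuclideanSpace ℝ (Fin n))) := by
          apply eLpNorm_mono_ae
          filter_upwards with ξ
          calc ‖g₁ ξ‖ ≤ C * h ξ := hg₁bd ξ
            _ ≤ ‖C * h ξ‖ := le_abs_self _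
      _ = ENNReal.ofReal C * eLpNorm h 2 (volume : Measure (EuclideanSpace ℝ (Fin n))) := by
          rw [show (fun ξ : EuclideanSpace ℝ (Fin n) => C * h ξ) = C • h from rfl, eLpNorm_const_smul]
          congr 1
          rw [Real.enorm_of_nonneg hC0.le]
  have e2 : eLpNorm g₂ 2 (volume : Measure (EuclideanSpace ℝ (Fin n))) ≤
      ENNReal.ofReal (2 * M / μ ^ 2) * eLpNorm d 2 (volume : Measure (EuclideanSpace ℝ (Fin n))) := by
    calc eLpNorm g₂ 2 (volume : Measure (EuclideanSpace ℝ (Fin n)))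
        ≤ eLpNorm (fun ξ : EuclideanSpace ℝ (Fin n) => (2 * M / μ ^ 2) * ‖d ξ‖) 2 (volume : Measure (EuclideanSpace ℝ (Fin n))) := by
          apply eLpNorm_mono_ae
          filter_upwards with ξ
          calc ‖g₂ ξ‖ ≤ (2 * M / μ ^ 2) * ‖d ξ‖ := hg₂bd ξ
            _ ≤ ‖(2 * M / μ ^ 2) * ‖d ξ‖‖ := le_abs_self _
      _ = ENNReal.ofReal (2 * M / μ ^ 2) * eLpNorm (fun ξ : EuclideanSpace ℝ (Fin n) => ‖d ξ‖) 2 (volume : Measure (EuclideanSpace ℝ (Fin n))) := by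
          rw [show (fun ξ : EuclideanSpace ℝ (Fin n) => (2 * M / μ ^ 2) * ‖d ξ‖) = (2 * M / μ ^ 2) • (fun ξ : EuclideanSpace ℝ (Fin n) => ‖d ξ‖) from rfl,
            eLpNorm_const_smul]
          congr 1
          rw [Real.enorm_of_nonneg (by positivity : (0:ℝ) ≤ 2 * M / μ ^ 2)]
      _ = ENNReal.ofReal (2 * M / μ ^ 2) * eLpNorm d 2 (volume : Measure (EuclideanSpace ℝ (Fin n))) := by
          rw [eLpNorm_norm]
  -- value identifications
  have eh : eLpNorm h 2 (volume : Measure (EuclideanSpace ℝ (Fin n)))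
      = ENNReal.ofReal (Real.sqrt (∫ ξ : EuclideanSpace ℝ (Fin n), ‖F ξ‖ ^ 2 * (1 + ‖ξ‖ ^ 2) ^ p)) := by
    rw [eLpNorm_two_sqrt' hhmem]
    congr 2
    apply integral_congr_ae
    filter_upwards with ξ
    rw [hh]
    simp only [Real.norm_eq_abs]
    rw [abs_of_nonneg (by positivity), mul_pow, ← Real.rpow_natCast ((1 + ‖ξ‖ ^ 2) ^ (p/2)) 2,
      ← Real.rpow_mul (by positivity)]
    norm_num
  have ed : eLpNorm d 2 (volume : Measure (EuclideanSpace ℝ (Fin n))) ≤ ENNReal.ofReal δ := by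
    rw [eLpNorm_two_sqrt' hdmem]
    apply ENNReal.ofReal_le_ofReal
    calc Real.sqrt (∫ ξ : EuclideanSpace ℝ (Fin n), ‖d ξ‖ ^ 2) = Real.sqrt (∫ ξ : EuclideanSpace ℝ (Fin n), ‖Y ξ - Yδ ξ‖ ^ 2) := by
          simp only [hd]
      _ ≤ δ := hnoise
  have eL : eLpNorm L 2 (volume : Measure (EuclideanSpace ℝ (Fin n)))
      = ENNReal.ofReal (Real.sqrt (∫ ξ : EuclideanSpace ℝ (Fin n),
          ‖F ξ - Λ ξ * Yδ ξ / ((1 + μ ^ 2 * ‖ξ‖ ^ 2 : ℝ) : ℂ)‖ ^ 2)) := by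
    rw [eLpNorm_two_sqrt' hLmem]
  -- combine
  have key : eLpNorm L 2 (volume : Measure (EuclideanSpace ℝ (Fin n))) ≤
      ENNReal.ofReal C * eLpNorm h 2 (volume : Measure (EuclideanSpace ℝ (Fin n))) + ENNReal.ofReal (2 * M / μ ^ 2) * ENNReal.ofReal δ := by
    calc eLpNorm L 2 (volume : Measure (EuclideanSpace ℝ (Fin n))) = eLpNorm (fun ξ : EuclideanSpace ℝ (Fin n) => g₁ ξ + g₂ ξ) 2 (volume : Measure (EuclideanSpace ℝ (Fin n))) :=
          eLpNorm_congr_ae hae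
      _ ≤ eLpNorm g₁ 2 (volume : Measure (EuclideanSpace ℝ (Fin n))) + eLpNorm g₂ 2 (volume : Measure (EuclideanSpace ℝ (Fin n))) :=
          eLpNorm_add_le hg₁m hg₂m (by norm_num)
      _ ≤ ENNReal.ofReal C * eLpNorm h 2 (volume : Measure (EuclideanSpace ℝ (Fin n))) + ENNReal.ofReal (2 * M / μ ^ 2) * ENNReal.ofReal δ :=
          add_le_add e1 (le_trans e2 (mul_le_mul_right ed _))
  rw [eL, eh] at key
  set Sh := Real.sqrt (∫ ξ : EuclideanSpace ℝ (Fin n), ‖F ξ‖ ^ 2 * (1 + ‖ξ‖ ^ 2) ^ p) with hSh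
  have hSh0 : 0 ≤ Sh := Real.sqrt_nonneg _
  have key2 : Real.sqrt (∫ ξ : EuclideanSpace ℝ (Fin n),
      ‖F ξ - Λ ξ * Yδ ξ / ((1 + μ ^ 2 * ‖ξ‖ ^ 2 : ℝ) : ℂ)‖ ^ 2)
      ≤ C * Sh + (2 * M / μ ^ 2) * δ := by
    have hfin1 : ENNReal.ofReal C * ENNReal.ofReal Sh ≠ ⊤ :=
      ENNReal.mul_ne_top ENNReal.ofReal_ne_top ENNReal.ofReal_ne_top
    have hfin2 : ENNReal.ofReal (2 * M / μ ^ 2) * ENNReal.ofReal δ ≠ ⊤ :=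
      ENNReal.mul_ne_top ENNReal.ofReal_ne_top ENNReal.ofReal_ne_top
    have := ENNReal.toReal_mono (ENNReal.add_ne_top.2 ⟨hfin1, hfin2⟩) key
    rw [ENNReal.toReal_ofReal (Real.sqrt_nonneg _)] at this
    refine le_trans this ?_
    rw [ENNReal.toReal_add hfin1 hfin2,
      ← ENNReal.ofReal_mul hC0.le, ← ENNReal.ofReal_mul (by positivity),
      ENNReal.toReal_ofReal (mul_nonneg hC0.le hSh0),
      ENNReal.toReal_ofReal (by positivity : (0:ℝ) ≤ 2 * M / μ ^ 2 * δ)]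
  calc Real.sqrt (∫ ξ : EuclideanSpace ℝ (Fin n),
      ‖F ξ - Λ ξ * Yδ ξ / ((1 + μ ^ 2 * ‖ξ‖ ^ 2 : ℝ) : ℂ)‖ ^ 2)
      ≤ C * Sh + (2 * M / μ ^ 2) * δ := key2
    _ = C * Sh + 2 * δ / μ ^ 2 * M := by ring
end
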